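/- (Lemma 18(a), evaluation of the Selberg/Harish-Chandra transform at t = i/2) For every X > 0, ∫₀^∞ f_X(r)·sinh(r) dr = X²/2; equivalently, h(i/2) = 2π∫₀^∞ f_X(r) sinh(r) dr = πX². -/

import Mathlib

open Real MeasureTheory

noncomputable section

/-- the function `f_X(r)`: `f_X(r) = ln((cosh r + sinh r)/(cosh r + √(sinh²r − X²)))` if
`X ≤ 2 sinh(r/2)`; `ln((cosh r + sinh r)(1+X²)/(cosh r + √(sinh²r − X²))²)` if
`2 sinh(r/2) ≤ X ≤ sinh r`; and `r` if `sinh r ≤ X`. -/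
def fxi (X r : ℝ) : ℝ :=
  if X ≤ 2 * Real.sinh (r / 2) then
    Real.log ((Real.cosh r + Real.sinh r) / (Real.cosh r + Real.sqrt ((Real.sinh r) ^ 2 - X ^ 2)))
  else if X ≤ Real.sinh r then
    Real.log ((Real.cosh r + Real.sinh r) * (1 + X ^ 2) /
      ((Real.cosh r + Real.sqrt ((Real.sinh r) ^ 2 - X ^ 2)) ^ 2))
  else r

open Set Filter Topology


def sQ (X r : ℝ) : ℝ := Real.sqrt (Real.sinh r ^ 2 - X ^ 2)
def fl (X r : ℝ) : ℝ := r - Real.log (Real.cosh r + sQ X r)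
def fm (X r : ℝ) : ℝ :=
  r + Real.log (1 + X ^ 2) - 2 * Real.log (Real.cosh r + sQ X r)
def Fl (X r : ℝ) : ℝ := fl X r * Real.cosh r - Real.sinh r + sQ X r
def Fm (X r : ℝ) : ℝ := fm X r * Real.cosh r - Real.sinh r + 2 * sQ X r
def F0 (r : ℝ) : ℝ := r * Real.cosh r - Real.sinh r

lemma sQ_nonneg (X r : ℝ) : 0 ≤ sQ X r := Real.sqrt_nonneg _

lemma D_pos (X r : ℝ) : 0 < Real.cosh r + sQ X r :=
  add_pos_of_pos_of_nonneg (Real.cosh_pos r) (sQ_nonneg X r)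

lemma sQ_sq {X r : ℝ} (h : X ≤ Real.sinh r) (hX : 0 ≤ X) :
    sQ X r ^ 2 = Real.sinh r ^ 2 - X ^ 2 := by
  rw [sQ, Real.sq_sqrt]; nlinarith

lemma sQ_le_sinh {X r : ℝ} (h : 0 ≤ Real.sinh r) (hX : 0 ≤ X) : sQ X r ≤ Real.sinh r := by
  rw [sQ]
  calc Real.sqrt (Real.sinh r ^ 2 - X ^ 2) ≤ Real.sqrt (Real.sinh r ^ 2) := by
        apply Real.sqrt_le_sqrt; nlinarith
    _ = Real.sinh r := by rw [Real.sqrt_sq h]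

lemma cont_sQ (X : ℝ) : Continuous (sQ X) := by
  exact ((Real.continuous_sinh.pow 2).sub continuous_const).sqrt

lemma cont_fl (X : ℝ) : Continuous (fl X) := by
  refine continuous_id.sub (Continuous.log (Real.continuous_cosh.add (cont_sQ X)) ?_)
  exact fun r => (D_pos X r).ne'

lemma cont_fm (X : ℝ) : Continuous (fm X) := by
  refine (continuous_id.add continuous_const).sub (Continuous.mul continuous_const
    (Continuous.log (Real.continuous_cosh.add (cont_sQ X)) fun r => (D_pos X r).ne'))

lemma cont_Fl (X : ℝ) : Continuous (Fl X) :=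
  (((cont_fl X).mul Real.continuous_cosh).sub Real.continuous_sinh).add (cont_sQ X)

lemma cont_Fm (X : ℝ) : Continuous (Fm X) :=
  (((cont_fm X).mul Real.continuous_cosh).sub Real.continuous_sinh).add
    (continuous_const.mul (cont_sQ X))

lemma sQ_pos {X r : ℝ} (h : X < Real.sinh r) (hX : 0 < X) : 0 < sQ X r := by
  rw [sQ]; apply Real.sqrt_pos.2; nlinarith

lemma hasDerivAt_sQ {X r : ℝ} (h : X < Real.sinh r) (hX : 0 < X) :
    HasDerivAt (sQ X) (Real.sinh r * Real.cosh r / sQ X r) r := by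
  have h0 : (0:ℝ) < Real.sinh r ^ 2 - X ^ 2 := by nlinarith
  have h1 : HasDerivAt (fun r => Real.sinh r ^ 2 - X ^ 2)
      (2 * Real.sinh r * Real.cosh r) r := by
    have := ((Real.hasDerivAt_sinh r).pow 2).sub_const (X ^ 2)
    simpa [mul_comm, mul_assoc] using this
  have h2 := h1.sqrt h0.ne'
  convert h2 using 1
  · rfl
  have hsq : sQ X r ≠ 0 := (sQ_pos h hX).ne'
  rw [sQ] at hsq ⊢
  field_simp

lemma hasDerivAt_logD {X r : ℝ} (h : X < Real.sinh r) (hX : 0 < X) :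
    HasDerivAt (fun r => Real.log (Real.cosh r + sQ X r)) (Real.sinh r / sQ X r) r := by
  have hd : HasDerivAt (fun r => Real.cosh r + sQ X r)
      (Real.sinh r + Real.sinh r * Real.cosh r / sQ X r) r :=
    (Real.hasDerivAt_cosh r).add (hasDerivAt_sQ h hX)
  have := hd.log (D_pos X r).ne'
  convert this using 1
  have hsq : sQ X r ≠ 0 := (sQ_pos h hX).ne'
  have hD : Real.cosh r + sQ X r ≠ 0 := (D_pos X r).ne'
  field_simp
  ring

lemma hasDerivAt_Fl {X r : ℝ} (h : X < Real.sinh r) (hX : 0 < X) :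
    HasDerivAt (Fl X) (fl X r * Real.sinh r) r := by
  have h1 : HasDerivAt (fl X) (1 - Real.sinh r / sQ X r) r :=
    (hasDerivAt_id r).sub (hasDerivAt_logD h hX)
  have h2 : HasDerivAt (Fl X)
      ((1 - Real.sinh r / sQ X r) * Real.cosh r + fl X r * Real.sinh r
        - Real.cosh r + Real.sinh r * Real.cosh r / sQ X r) r :=
    ((h1.mul (Real.hasDerivAt_cosh r)).sub (Real.hasDerivAt_sinh r)).add (hasDerivAt_sQ h hX)
  convert h2 using 1
  have hsq : sQ X r ≠ 0 := (sQ_pos h hX).ne'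
  field_simp
  ring

lemma hasDerivAt_Fm {X r : ℝ} (h : X < Real.sinh r) (hX : 0 < X) :
    HasDerivAt (Fm X) (fm X r * Real.sinh r) r := by
  have h1 : HasDerivAt (fm X) (1 - 2 * (Real.sinh r / sQ X r)) r := by
    have := ((hasDerivAt_id r).add_const (Real.log (1 + X ^ 2))).sub
      ((hasDerivAt_logD h hX).const_mul 2)
    exact this
  have h2 : HasDerivAt (Fm X)
      ((1 - 2 * (Real.sinh r / sQ X r)) * Real.cosh r + fm X r * Real.sinh r
        - Real.cosh r + 2 * (Real.sinh r * Real.cosh r / sQ X r)) r :=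
    ((h1.mul (Real.hasDerivAt_cosh r)).sub (Real.hasDerivAt_sinh r)).add
      ((hasDerivAt_sQ h hX).const_mul 2)
  convert h2 using 1
  have hsq : sQ X r ≠ 0 := (sQ_pos h hX).ne'
  field_simp
  ring

lemma hasDerivAt_F0 (r : ℝ) : HasDerivAt F0 (r * Real.sinh r) r := by
  have h : HasDerivAt F0 (1 * Real.cosh r + r * Real.sinh r - Real.cosh r) r :=
    ((hasDerivAt_id r).mul (Real.hasDerivAt_cosh r)).sub (Real.hasDerivAt_sinh r)
  convert h using 1; ring

lemma fxi_eq_fl {X r : ℝ} (h : X ≤ 2 * Real.sinh (r / 2)) : fxi X r = fl X r := by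
  rw [fxi, if_pos h, fl, Real.cosh_add_sinh]
  rw [show Real.cosh r + Real.sqrt (Real.sinh r ^ 2 - X ^ 2) = Real.cosh r + sQ X r from rfl]
  rw [Real.log_div (Real.exp_ne_zero r) (D_pos X r).ne', Real.log_exp]

lemma fxi_eq_fm {X r : ℝ} (h1 : ¬ X ≤ 2 * Real.sinh (r / 2)) (h2 : X ≤ Real.sinh r)
    (hX : 0 < X) : fxi X r = fm X r := by
  rw [fxi, if_neg h1, if_pos h2, fm, Real.cosh_add_sinh]
  rw [show Real.cosh r + Real.sqrt (Real.sinh r ^ 2 - X ^ 2) = Real.cosh r + sQ X r from rfl]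
  have h1X : (0:ℝ) < 1 + X ^ 2 := by positivity
  rw [Real.log_div (by positivity) (pow_ne_zero _ (D_pos X r).ne'),
    Real.log_mul (Real.exp_ne_zero r) h1X.ne', Real.log_exp, Real.log_pow]
  push_cast
  ring

lemma fxi_eq_id {X r : ℝ} (hr : 0 < r) (h : Real.sinh r < X) : fxi X r = r := by
  have h2 : 2 * Real.sinh (r / 2) ≤ Real.sinh r := by
    have : Real.sinh r = 2 * Real.sinh (r / 2) * Real.cosh (r / 2) := by
      rw [show r = 2 * (r / 2) by ring, Real.sinh_two_mul]; ring_nf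
    nlinarith [Real.one_le_cosh (r / 2), Real.sinh_nonneg_iff.2 (by linarith : (0:ℝ) ≤ r / 2)]
  rw [fxi, if_neg (by linarith), if_neg (by linarith)]

lemma tendsto_sinh_atTop : Tendsto Real.sinh atTop atTop := by
  apply tendsto_atTop_mono' _ (_ : ∀ᶠ r in atTop, Real.exp r / 2 - 1/2 ≤ Real.sinh r)
  · apply Filter.Tendsto.atTop_add _ tendsto_const_nhds
    exact Real.tendsto_exp_atTop.atTop_div_const (by norm_num)
  · filter_upwards [eventually_ge_atTop (0:ℝ)] with r hr
    rw [Real.sinh_eq]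
    have : Real.exp (-r) ≤ 1 := Real.exp_le_one_iff.2 (by linarith)
    linarith

lemma B_bounds {X r : ℝ} (h : X < Real.sinh r) (hX : 0 < X) :
    0 ≤ Real.sinh r - sQ X r ∧ Real.sinh r - sQ X r ≤ X ^ 2 / Real.sinh r := by
  have hs : 0 < Real.sinh r := lt_trans hX h
  have hle : sQ X r ≤ Real.sinh r := sQ_le_sinh hs.le hX.le
  have hsq : sQ X r ^ 2 = Real.sinh r ^ 2 - X ^ 2 := sQ_sq h.le hX.le
  have h0 : 0 ≤ sQ X r := sQ_nonneg X r
  refine ⟨by linarith, ?_⟩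
  rw [le_div_iff₀ hs]
  nlinarith [mul_nonneg h0 (sub_nonneg.2 hle)]

lemma A_bounds {X r : ℝ} (h : X < Real.sinh r) (hX : 0 < X) :
    0 ≤ fl X r * Real.cosh r ∧ fl X r * Real.cosh r ≤ X ^ 2 / Real.sinh r := by
  have hs : 0 < Real.sinh r := lt_trans hX h
  have hc : 0 < Real.cosh r := Real.cosh_pos r
  have hD : 0 < Real.cosh r + sQ X r := D_pos X r
  have hle : sQ X r ≤ Real.sinh r := sQ_le_sinh hs.le hX.le
  have hsq : sQ X r ^ 2 = Real.sinh r ^ 2 - X ^ 2 := sQ_sq h.le hX.le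
  have h0 : 0 ≤ sQ X r := sQ_nonneg X r
  have hDe : Real.cosh r + sQ X r ≤ Real.exp r := by
    rw [← Real.cosh_add_sinh]; linarith
  have hfl0 : 0 ≤ fl X r := by
    have h7 := Real.log_le_log hD hDe
    rw [Real.log_exp] at h7
    rw [fl]; linarith
  constructor
  · exact mul_nonneg hfl0 hc.le
  · -- fl * D ≤ exp r - D = sinh - sQ
    have hkey : fl X r * (Real.cosh r + sQ X r) ≤ Real.sinh r - sQ X r := by
      have h1 : fl X r = Real.log (Real.exp r / (Real.cosh r + sQ X r)) := by
        rw [Real.log_div (Real.exp_ne_zero r) hD.ne', Real.log_exp, fl]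
      have h2 : Real.log (Real.exp r / (Real.cosh r + sQ X r))
          ≤ Real.exp r / (Real.cosh r + sQ X r) - 1 :=
        Real.log_le_sub_one_of_pos (by positivity)
      have h3 : fl X r ≤ Real.exp r / (Real.cosh r + sQ X r) - 1 := by rw [h1]; exact h2
      have h4 := mul_le_mul_of_nonneg_right h3 hD.le
      calc fl X r * (Real.cosh r + sQ X r)
          ≤ (Real.exp r / (Real.cosh r + sQ X r) - 1) * (Real.cosh r + sQ X r) := h4
        _ = Real.exp r - (Real.cosh r + sQ X r) := by field_simp
        _ = Real.sinh r - sQ X r := by rw [← Real.cosh_add_sinh]; ring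
    have h5 : fl X r * Real.cosh r ≤ Real.sinh r - sQ X r := by
      nlinarith [mul_le_mul_of_nonneg_left h0 hfl0]
    have h6 : Real.sinh r - sQ X r ≤ X ^ 2 / Real.sinh r := (B_bounds h hX).2
    linarith

lemma tendsto_Fl {X : ℝ} (hX : 0 < X) : Tendsto (Fl X) atTop (𝓝 0) := by
  have hev : ∀ᶠ r in atTop, X < Real.sinh r := by
    have := tendsto_sinh_atTop.eventually_gt_atTop X
    exact this
  have hq : Tendsto (fun r => X ^ 2 / Real.sinh r) atTop (𝓝 0) := by
    simpa [div_eq_mul_inv] using (tendsto_sinh_atTop.inv_tendsto_atTop).const_mul (X ^ 2)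
  have hA : Tendsto (fun r => fl X r * Real.cosh r) atTop (𝓝 0) := by
    apply tendsto_of_tendsto_of_tendsto_of_le_of_le' tendsto_const_nhds hq
    · filter_upwards [hev] with r hr; exact (A_bounds hr hX).1
    · filter_upwards [hev] with r hr; exact (A_bounds hr hX).2
  have hB : Tendsto (fun r => Real.sinh r - sQ X r) atTop (𝓝 0) := by
    apply tendsto_of_tendsto_of_tendsto_of_le_of_le' tendsto_const_nhds hq
    · filter_upwards [hev] with r hr; exact (B_bounds hr hX).1
    · filter_upwards [hev] with r hr; exact (B_bounds hr hX).2
  have : Tendsto (fun r => fl X r * Real.cosh r - (Real.sinh r - sQ X r)) atTop (𝓝 (0 - 0)) :=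
    hA.sub hB
  rw [show (0:ℝ) - 0 = 0 by ring] at this
  apply this.congr
  intro r; rw [Fl]; ring

lemma fl_nonneg {X r : ℝ} (h : X < Real.sinh r) (hX : 0 < X) : 0 ≤ fl X r := by
  have hs : 0 < Real.sinh r := lt_trans hX h
  have hD : 0 < Real.cosh r + sQ X r := D_pos X r
  have hDe : Real.cosh r + sQ X r ≤ Real.exp r := by
    rw [← Real.cosh_add_sinh]; linarith [sQ_le_sinh hs.le hX.le]
  have h7 := Real.log_le_log hD hDe
  rw [Real.log_exp] at h7
  rw [fl]; linarith


/-- Lemma 18(a): `∫₀^∞ f_X(r) sinh r dr = X²/2`; equivalently the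
Selberg/Harish-Chandra transform satisfies `h(i/2) = 2π ∫₀^∞ f_X(r) sinh r dr = πX²`. -/
theorem integral_fxi_sinh (X : ℝ) (hX : 0 < X) :
    (∫ r in Set.Ioi (0:ℝ), fxi X r * Real.sinh r) = X ^ 2 / 2 ∧
    2 * π * (∫ r in Set.Ioi (0:ℝ), fxi X r * Real.sinh r) = π * X ^ 2 := by
  set a := Real.arsinh X with ha_def
  set t := Real.arsinh (X / 2) with ht_def
  set b := 2 * t with hb_def
  have hsa : Real.sinh a = X := Real.sinh_arsinh X
  have hst : Real.sinh t = X / 2 := Real.sinh_arsinh _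
  have ha0 : 0 < a := Real.arsinh_pos_iff.2 hX
  have ht0 : 0 < t := Real.arsinh_pos_iff.2 (by linarith)
  have hb0 : 0 < b := by positivity
  have hsb : Real.sinh b = X * Real.cosh t := by
    rw [hb_def, Real.sinh_two_mul, hst]; ring
  have hct2 : Real.cosh t ^ 2 = 1 + X ^ 2 / 4 := by
    rw [Real.cosh_sq, hst]; ring
  have hab : a < b := by
    rw [← Real.sinh_lt_sinh, hsa, hsb]
    nlinarith [Real.one_lt_cosh.2 ht0.ne', Real.cosh_pos t]
  -- values at a
  have hsQa : sQ X a = 0 := by rw [sQ, hsa]; simp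
  have hca2 : Real.cosh a ^ 2 = 1 + X ^ 2 := by rw [Real.cosh_sq, hsa]; ring
  have hfma : fm X a = a := by
    have h2l : 2 * Real.log (Real.cosh a) = Real.log (Real.cosh a ^ 2) := by
      rw [Real.log_pow]; push_cast; ring
    rw [fm, hsQa, add_zero, h2l, hca2]; ring
  -- values at b
  have hsb2 : Real.sinh b ^ 2 - X ^ 2 = (X ^ 2 / 2) ^ 2 := by
    rw [hsb]; nlinarith [hct2]
  have hsQb : sQ X b = X ^ 2 / 2 := by
    rw [sQ, hsb2, Real.sqrt_sq (by positivity)]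
  have hcb : Real.cosh b = 1 + X ^ 2 / 2 := by
    rw [hb_def, Real.cosh_two_mul, hct2, Real.cosh_sq] at *
    nlinarith [hst]
  have hDb : Real.cosh b + sQ X b = 1 + X ^ 2 := by rw [hcb, hsQb]; ring
  have hfmb : fm X b = fl X b := by rw [fm, fl, hDb]; ring
  -- region facts
  have hXlt : ∀ r, a < r → X < Real.sinh r := fun r h => by
    rw [← hsa]; exact Real.sinh_lt_sinh.2 h
  have h2lt : ∀ r, r < b → 2 * Real.sinh (r / 2) < X := fun r h => by
    have : Real.sinh (r / 2) < X / 2 := by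
      rw [← hst]; exact Real.sinh_lt_sinh.2 (by rw [hb_def] at h; linarith)
    linarith
  have h2ge : ∀ r, b < r → X ≤ 2 * Real.sinh (r / 2) := fun r h => by
    have : X / 2 < Real.sinh (r / 2) := by
      rw [← hst]; exact Real.sinh_lt_sinh.2 (by rw [hb_def] at h; linarith)
    linarith
  -- pointwise identification of the integrand
  have hg1 : EqOn (fun r => fxi X r * Real.sinh r) (fun r => r * Real.sinh r) (Ioo 0 a) := by
    intro r hr
    have : Real.sinh r < X := by rw [← hsa]; exact Real.sinh_lt_sinh.2 hr.2
    simp only [fxi_eq_id hr.1 this]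
  have hg2 : EqOn (fun r => fxi X r * Real.sinh r) (fun r => fm X r * Real.sinh r)
      (Ioo a b) := by
    intro r hr
    have h1 : ¬ X ≤ 2 * Real.sinh (r / 2) := not_le.2 (h2lt r hr.2)
    simp only [fxi_eq_fm h1 (hXlt r hr.1).le hX]
  have hg3 : EqOn (fun r => fxi X r * Real.sinh r) (fun r => fl X r * Real.sinh r)
      (Ioi b) := by
    intro r hr
    simp only [fxi_eq_fl (h2ge r hr)]
  -- the three integrals
  have J1 : ∫ r in Ioc 0 a, fxi X r * Real.sinh r = F0 a - F0 0 := by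
    rw [integral_Ioc_eq_integral_Ioo, setIntegral_congr_fun measurableSet_Ioo hg1,
      ← integral_Ioc_eq_integral_Ioo, ← intervalIntegral.integral_of_le ha0.le]
    exact intervalIntegral.integral_eq_sub_of_hasDerivAt (fun x _ => hasDerivAt_F0 x)
      ((continuous_id.mul Real.continuous_sinh).intervalIntegrable 0 a)
  have J2 : ∫ r in Ioc a b, fxi X r * Real.sinh r = Fm X b - Fm X a := by
    rw [integral_Ioc_eq_integral_Ioo, setIntegral_congr_fun measurableSet_Ioo hg2,
      ← integral_Ioc_eq_integral_Ioo, ← intervalIntegral.integral_of_le hab.le]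
    exact intervalIntegral.integral_eq_sub_of_hasDerivAt_of_le hab.le
      (cont_Fm X).continuousOn
      (fun x hx => hasDerivAt_Fm (hXlt x hx.1) hX)
      (((cont_fm X).mul Real.continuous_sinh).intervalIntegrable a b)
  have hflpos : ∀ x ∈ Ioi b, 0 ≤ fl X x * Real.sinh x := by
    intro x hx
    have hax : X < Real.sinh x := hXlt x (lt_trans hab hx)
    exact mul_nonneg (fl_nonneg hax hX) (by linarith)
  have hFlderiv : ∀ x ∈ Ioi b, HasDerivAt (Fl X) (fl X x * Real.sinh x) x := fun x hx =>
    hasDerivAt_Fl (hXlt x (lt_trans hab hx)) hX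
  have J3' : ∫ r in Ioi b, fl X r * Real.sinh r = 0 - Fl X b :=
    integral_Ioi_of_hasDerivAt_of_nonneg (cont_Fl X).continuousWithinAt hFlderiv hflpos
      (tendsto_Fl hX)
  have hint3 : IntegrableOn (fun r => fl X r * Real.sinh r) (Ioi b) :=
    integrableOn_Ioi_deriv_of_nonneg (cont_Fl X).continuousWithinAt hFlderiv hflpos
      (tendsto_Fl hX)
  have J3 : ∫ r in Ioi b, fxi X r * Real.sinh r = 0 - Fl X b := by
    rw [setIntegral_congr_fun measurableSet_Ioi hg3, J3']
  -- integrability of the pieces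
  have hint1 : IntegrableOn (fun r => fxi X r * Real.sinh r) (Ioc 0 a) := by
    rw [integrableOn_Ioc_iff_integrableOn_Ioo]
    exact (((continuous_id.mul Real.continuous_sinh).integrableOn_Ioc.mono_set
      Ioo_subset_Ioc_self).congr_fun hg1.symm measurableSet_Ioo)
  have hint2 : IntegrableOn (fun r => fxi X r * Real.sinh r) (Ioc a b) := by
    rw [integrableOn_Ioc_iff_integrableOn_Ioo]
    exact ((((cont_fm X).mul Real.continuous_sinh).integrableOn_Ioc.mono_set
      Ioo_subset_Ioc_self).congr_fun hg2.symm measurableSet_Ioo)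
  have hint3' : IntegrableOn (fun r => fxi X r * Real.sinh r) (Ioi b) :=
    hint3.congr_fun hg3.symm measurableSet_Ioi
  -- splitting
  have hsplit : ∫ r in Ioi (0:ℝ), fxi X r * Real.sinh r
      = (∫ r in Ioc 0 a, fxi X r * Real.sinh r) + (∫ r in Ioc a b, fxi X r * Real.sinh r)
        + (∫ r in Ioi b, fxi X r * Real.sinh r) := by
    rw [← setIntegral_union (Ioc_disjoint_Ioc_of_le le_rfl) measurableSet_Ioc hint1 hint2,
      Ioc_union_Ioc_eq_Ioc ha0.le hab.le,
      ← setIntegral_union (Ioc_disjoint_Ioi le_rfl) measurableSet_Ioi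
        ((hint1.union hint2).mono_set (by rw [Ioc_union_Ioc_eq_Ioc ha0.le hab.le])) hint3',
      Ioc_union_Ioi_eq_Ioi (by linarith : (0:ℝ) ≤ b)]
  -- final computation
  have hF00 : F0 0 = 0 := by simp [F0]
  have hFma : Fm X a = F0 a := by rw [Fm, F0, hfma, hsQa]; ring
  have hFmFl : Fm X b - Fl X b = X ^ 2 / 2 := by rw [Fm, Fl, hfmb, hsQb]; ring
  have hmain : ∫ r in Ioi (0:ℝ), fxi X r * Real.sinh r = X ^ 2 / 2 := by
    rw [hsplit, J1, J2, J3]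
    rw [hF00, hFma] at *
    linarith
  exact ⟨hmain, by rw [hmain]; ring⟩
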